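/- arXiv:2401.01766 — 3 statements merged into one kernel-verified Lean document; each statement's English description precedes it below -/
import Mathlib

section
/- Let c be an edge-coloring of K_r with r > k ≥ 3 such that exactly one vertex v saturates all non-exclusive colors and every color is saturated by some vertex, with s₀ = 0 and s₁ = 1 (the unique non-exclusive color is saturated by exactly one vertex v). Then K_r − v is rainbow and, since r − 1 ≥ k, the coloring contains a rainbow K_k. -/
open Classical

noncomputable section

/-- A rainbow `k`-clique in the edge-colored graph `G^c`. -/
def HasRainbowClique {V : Type*} (G : SimpleGraph V) (c : Sym2 V → ℕ) (k : ℕ) : Prop :=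
  ∃ S : Finset V, S.card = k ∧ (∀ x ∈ S, ∀ y ∈ S, x ≠ y → G.Adj x y) ∧
    ∀ x ∈ S, ∀ y ∈ S, ∀ z ∈ S, ∀ w ∈ S,
      x ≠ y → z ≠ w → c s(x, y) = c s(z, w) → s(x, y) = s(z, w)

/-- The number of colors used on the edges of `G`. -/
noncomputable def ncolors {V : Type*} (G : SimpleGraph V) (c : Sym2 V → ℕ) : ℕ :=
  (c '' G.edgeSet).ncard

/-- The anti-Ramsey number `ar(G, K_k)`: the maximum number of colors of an
edge-coloring of `G` without a rainbow `K_k`. -/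
noncomputable def antiRamsey {V : Type*} (G : SimpleGraph V) (k : ℕ) : ℕ :=
  sSup {m | ∃ c : Sym2 V → ℕ, ¬ HasRainbowClique G c k ∧ ncolors G c = m}

/-- A color `a` is saturated by the vertex `x`: some edge has color `a` and every
edge of color `a` is incident to `x`. -/
def Saturates {V : Type*} (G : SimpleGraph V) (c : Sym2 V → ℕ) (x : V) (a : ℕ) : Prop :=
  (∃ e ∈ G.edgeSet, c e = a) ∧ ∀ e ∈ G.edgeSet, c e = a → x ∈ e

/-- The set of colors saturated by `x`. -/
def satColors {V : Type*} (G : SimpleGraph V) (c : Sym2 V → ℕ) (x : V) : Set ℕ :=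
  {a | Saturates G c x a}

/-- The saturated color degree `d^s(x)`. -/
noncomputable def satDegree {V : Type*} (G : SimpleGraph V) (c : Sym2 V → ℕ) (x : V) : ℕ :=
  (satColors G c x).ncard

/-- `satCount r c i` is the number `s_i` of used colors saturated by exactly `i`
vertices of the edge-colored `K_r`. -/
noncomputable def satCount (r : ℕ) (c : Sym2 (Fin r) → ℕ) (i : ℕ) : ℕ :=
  {a : ℕ | (∃ e ∈ (⊤ : SimpleGraph (Fin r)).edgeSet, c e = a) ∧
    {x : Fin r | Saturates (⊤ : SimpleGraph (Fin r)) c x a}.ncard = i}.ncard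

lemma sym2_common_mem {V : Type*} {e₁ e₂ : Sym2 V} {x y : V} (hne : e₁ ≠ e₂)
    (hx1 : x ∈ e₁) (hx2 : x ∈ e₂) (hy1 : y ∈ e₁) (hy2 : y ∈ e₂) : x = y := by
  induction e₁ using Sym2.inductionOn with
  | hf a b =>
    induction e₂ using Sym2.inductionOn with
    | hf p q =>
      simp only [Sym2.mem_iff] at hx1 hx2 hy1 hy2
      rcases hx1 with rfl | rfl <;> rcases hy1 with rfl | rfl <;>
        rcases hx2 with h | h <;> rcases hy2 with h' | h' <;>
        first
          | rfl
          | (exfalso; apply hne; rw [Sym2.eq_iff]; tauto)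
          | (subst h; subst h'; first | rfl | (exfalso; apply hne; rw [Sym2.eq_iff]; tauto))

/-- If in an edge-coloring of `K_r` (`r > k ≥ 3`) every color is saturated by a vertex
(`s₀ = 0`), exactly one color is saturated by exactly one vertex (`s₁ = 1`) and that
color is saturated by `v`, then `K_r - v` is rainbow and the coloring contains a
rainbow `K_k`. -/
theorem rainbow_of_s0_zero_s1_one (r k : ℕ) (hk : 3 ≤ k) (hkr : k < r)
    (c : Sym2 (Fin r) → ℕ) (v : Fin r)
    (hs0 : satCount r c 0 = 0) (hs1 : satCount r c 1 = 1)
    (hv : ∀ a : ℕ, (∃ e ∈ (⊤ : SimpleGraph (Fin r)).edgeSet, c e = a) →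
      {x : Fin r | Saturates (⊤ : SimpleGraph (Fin r)) c x a}.ncard = 1 →
      Saturates (⊤ : SimpleGraph (Fin r)) c v a) :
    (∀ e₁ ∈ (⊤ : SimpleGraph (Fin r)).edgeSet, ∀ e₂ ∈ (⊤ : SimpleGraph (Fin r)).edgeSet,
      v ∉ e₁ → v ∉ e₂ → c e₁ = c e₂ → e₁ = e₂) ∧
    HasRainbowClique (⊤ : SimpleGraph (Fin r)) c k := by
  have hfin : ∀ a : ℕ, Set.Finite {x : Fin r | Saturates (⊤ : SimpleGraph (Fin r)) c x a} :=
    fun a => Set.toFinite _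
  have hpart1 : ∀ e₁ ∈ (⊤ : SimpleGraph (Fin r)).edgeSet, ∀ e₂ ∈ (⊤ : SimpleGraph (Fin r)).edgeSet,
      v ∉ e₁ → v ∉ e₂ → c e₁ = c e₂ → e₁ = e₂ := by
    intro e₁ he₁ e₂ he₂ hv1 hv2 hcc
    by_contra hne
    set a := c e₁ with ha
    have hused : ∃ e ∈ (⊤ : SimpleGraph (Fin r)).edgeSet, c e = a := ⟨e₁, he₁, rfl⟩
    -- the set of saturating vertices is nonempty
    have hsat0 : {x : Fin r | Saturates (⊤ : SimpleGraph (Fin r)) c x a}.ncard ≠ 0 := by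
      intro h0
      have hmemA : a ∈ {a : ℕ | (∃ e ∈ (⊤ : SimpleGraph (Fin r)).edgeSet, c e = a) ∧
          {x : Fin r | Saturates (⊤ : SimpleGraph (Fin r)) c x a}.ncard = 0} := ⟨hused, h0⟩
      have hsub : {a : ℕ | (∃ e ∈ (⊤ : SimpleGraph (Fin r)).edgeSet, c e = a) ∧
          {x : Fin r | Saturates (⊤ : SimpleGraph (Fin r)) c x a}.ncard = 0}
          ⊆ c '' (⊤ : SimpleGraph (Fin r)).edgeSet := by
        rintro b ⟨⟨e, he, hce⟩, -⟩; exact ⟨e, he, hce⟩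
      have hfinS := (Set.Finite.image c (Set.toFinite _)).subset hsub
      have hemp := (Set.ncard_eq_zero hfinS).mp hs0
      rw [hemp] at hmemA
      exact hmemA
    obtain ⟨x, hx⟩ := Set.nonempty_of_ncard_ne_zero hsat0
    -- x saturates a, hence x ∈ e₁ and x ∈ e₂
    have hxe₁ : x ∈ e₁ := hx.2 e₁ he₁ rfl
    have hxe₂ : x ∈ e₂ := hx.2 e₂ he₂ hcc.symm
    -- the saturating set is exactly {x}
    have hset : {y : Fin r | Saturates (⊤ : SimpleGraph (Fin r)) c y a} = {x} := by
      apply Set.eq_singleton_iff_unique_mem.mpr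
      refine ⟨hx, fun y hy => ?_⟩
      exact sym2_common_mem hne (hy.2 e₁ he₁ rfl) (hy.2 e₂ he₂ hcc.symm) hxe₁ hxe₂
    have h1 : {y : Fin r | Saturates (⊤ : SimpleGraph (Fin r)) c y a}.ncard = 1 := by
      rw [hset]; simp
    have hvs := hv a hused h1
    exact hv1 (hvs.2 e₁ he₁ rfl)
  refine ⟨hpart1, ?_⟩
  -- build a rainbow clique avoiding v
  have hcard : k ≤ (Finset.univ.erase v).card := by
    rw [Finset.card_erase_of_mem (Finset.mem_univ v), Finset.card_univ, Fintype.card_fin]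
    omega
  obtain ⟨S, hSsub, hScard⟩ := Finset.exists_subset_card_eq hcard
  have hSv : ∀ x ∈ S, x ≠ v := fun x hx => Finset.ne_of_mem_erase (hSsub hx)
  refine ⟨S, hScard, fun x _ y _ hxy => by simp [hxy], ?_⟩
  intro x hx y hy z hz w hw hxy hzw hc
  have hmem : ∀ p q : Fin r, p ≠ q → s(p, q) ∈ (⊤ : SimpleGraph (Fin r)).edgeSet := by
    intro p q h; simpa [SimpleGraph.mem_edgeSet] using h
  have hnv : ∀ p, p ∈ S → ∀ q, q ∈ S → v ∉ s(p, q) := by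
    intro p hp q hq h
    rw [Sym2.mem_iff] at h
    rcases h with h | h
    · exact hSv p hp h.symm
    · exact hSv q hq h.symm
  exact hpart1 _ (hmem x y hxy) _ (hmem z w hzw) (hnv x hx y hy) (hnv z hz w hw) hc
end
end

section
/- If k ≥ 4 and n ≥ k + 1, then ex(K_n, K_k − e) = ex(K_n, K_{k−1}) = e(T_{n,k−2}), where K_k − e is the complete graph on k vertices minus one edge and T_{n,k−2} is the Turán graph. -/
open Classical

noncomputable section

/-- The Turán number `ex(K_n, K_m)`: the maximum number of edges of a
`K_m`-free subgraph of `K_n`. -/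
noncomputable def exNum (n m : ℕ) : ℕ :=
  sSup {e | ∃ H : SimpleGraph (Fin n), H.CliqueFree m ∧ H.edgeSet.ncard = e}

/-- `G` contains a copy of `H`. -/
def ContainsCopy {V W : Type*} (G : SimpleGraph V) (H : SimpleGraph W) : Prop :=
  ∃ f : W → V, Function.Injective f ∧ ∀ a b, H.Adj a b → G.Adj (f a) (f b)

/-- The Turán number `ex(K_n, H)`: the maximum number of edges of an `H`-free
subgraph of `K_n`. -/
noncomputable def exNumH (n : ℕ) {W : Type*} (H : SimpleGraph W) : ℕ :=
  sSup {e | ∃ G : SimpleGraph (Fin n), ¬ ContainsCopy G H ∧ G.edgeSet.ncard = e}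

/-!
With `r = k - 2`, the graph `K_{r+2} - e` contains `K_{r+1}`, so only
`ex(n, K_{r+2} - e) ≤ t(n, r)` needs proof; it goes by induction on `n` in steps of `r + 1`.
A `K_{r+1}`-free graph is covered by Turán's theorem. Otherwise take an `(r+1)`-clique `Q`:
a vertex outside `Q` with `r` neighbours in `Q` would complete a copy of `K_{r+2} - e` together
with the vertex of `Q` it misses, so at most `(n - r - 1)(r - 1)` edges leave `Q` and
`e(G) ≤ C(r+1, 2) + (n - r - 1)(r - 1) + t(n - r - 1, r)`. This is at most
`t(n, r)` because `t(m + 1, r) - t(m, r) = m - ⌊m/r⌋ ≥ 1`.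
-/

open Finset SimpleGraph

def cliqueMinusEdge (r : ℕ) : SimpleGraph (Fin (r + 2)) :=
  (⊤ : SimpleGraph (Fin (r + 2))).deleteEdges {s(0, 1)}

lemma top_isContained_cliqueMinusEdge (r : ℕ) :
    (⊤ : SimpleGraph (Fin (r + 1))) ⊑ cliqueMinusEdge r := by
  refine ⟨⟨⟨Fin.succ, fun {a b} hab ↦ ?_⟩, Fin.succ_injective _⟩⟩
  simp [cliqueMinusEdge, hab.ne, Fin.succ_ne_zero]

lemma cliqueMinusEdge_isContained {V : Type*} {G : SimpleGraph V} {r : ℕ} {T : Finset V}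
    (hT : G.IsNClique r T) {u v : V} (huv : u ≠ v) (hu : u ∉ T) (hv : v ∉ T)
    (hadj : ∀ t ∈ T, G.Adj u t ∧ G.Adj v t) : cliqueMinusEdge r ⊑ G := by
  have hpair : ∀ x y, (x = u ∨ x = v ∨ x ∈ T) → (y = u ∨ y = v ∨ y ∈ T) → x ≠ y →
      s(x, y) ≠ s(u, v) → G.Adj x y := by
    rintro x y (rfl | rfl | hx) (rfl | rfl | hy) hxy hs
    all_goals first
      | exact absurd rfl hxy | exact absurd rfl hs | exact absurd Sym2.eq_swap hs
      | exact (hadj _ ‹_›).1 | exact (hadj _ ‹_›).2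
      | exact ((hadj _ ‹_›).1).symm | exact ((hadj _ ‹_›).2).symm
      | exact hT.1 hx hy hxy
  let e : Fin r ≃ T := (T.equivFin.trans (finCongr hT.card_eq)).symm
  let f : Fin (r + 2) → V := Fin.cons u (Fin.cons v fun i ↦ (e i : V))
  have hf : Function.Injective f := by
    simp only [f, Fin.cons_injective_iff, Fin.range_cons, Set.mem_insert_iff, Set.mem_range,
      not_or, not_exists]
    exact ⟨⟨huv, fun i h ↦ hu (h ▸ (e i).2)⟩, fun i h ↦ hv (h ▸ (e i).2),
      Subtype.val_injective.comp e.injective⟩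
  have hrange (a : Fin (r + 2)) : f a = u ∨ f a = v ∨ f a ∈ T :=
    Fin.cases (.inl rfl) (Fin.cases (.inr (.inl rfl)) fun i ↦ .inr (.inr (e i).2)) a
  refine ⟨⟨⟨f, fun {a b} hab ↦ ?_⟩, hf⟩⟩
  rw [cliqueMinusEdge, deleteEdges_adj, top_adj, Set.mem_singleton_iff] at hab
  refine hpair _ _ (hrange a) (hrange b) (hf.ne hab.1) ?_
  rw [show s(u, v) = s(f 0, f 1) from rfl, ← Sym2.map_mk, ← Sym2.map_mk]
  exact (Sym2.map.injective hf).ne hab.2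

lemma card_adj_le_of_cliqueMinusEdge_free {V : Type*} {G : SimpleGraph V} [DecidableRel G.Adj]
    {r : ℕ} (hG : (cliqueMinusEdge r).Free G) {Q : Finset V} (hQ : G.IsNClique (r + 1) Q)
    {v : V} (hv : v ∉ Q) : #{w ∈ Q | G.Adj v w} ≤ r - 1 := by
  by_contra! h
  obtain ⟨T, hTN, hT⟩ := exists_subset_card_eq (s := {w ∈ Q | G.Adj v w}) (n := r) (by omega)
  have hTQ : T ⊆ Q := hTN.trans (filter_subset _ _)
  obtain ⟨u, huQ, huT⟩ := exists_mem_notMem_of_card_lt_card (s := T) (t := Q)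
    (by rw [hT, hQ.card_eq]; omega)
  refine hG (cliqueMinusEdge_isContained ⟨hQ.1.subset hTQ, hT⟩ (ne_of_mem_of_not_mem huQ hv)
    huT (fun h ↦ hv (hTQ h)) fun t ht ↦ ⟨hQ.1 huQ (hTQ ht) (ne_of_mem_of_not_mem ht huT).symm, ?_⟩)
  exact (mem_filter.mp (hTN ht)).2

lemma card_edgeFinset_turanGraph_of_le {n r : ℕ} (hn : n ≤ r) :
    #(turanGraph n r).edgeFinset = n.choose 2 := by
  have := card_edgeFinset_top_eq_card_choose_two (V := Fin n)
  rw [Fintype.card_fin] at this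
  convert! this
  exact turanGraph_eq_top.mpr (.inr hn)

lemma card_edgeFinset_turanGraph_succ {r : ℕ} (hr : 0 < r) (m : ℕ) :
    #(turanGraph (m + 1) r).edgeFinset = #(turanGraph m r).edgeFinset + (m - m / r) := by
  induction m using Nat.strong_induction_on with
  | _ m ih =>
  rcases lt_or_ge m r with hm | hm
  · rw [card_edgeFinset_turanGraph_of_le hm, card_edgeFinset_turanGraph_of_le hm.le,
      Nat.div_eq_of_lt hm, Nat.sub_zero, Nat.choose_succ_left _ _ two_pos]
    simp [add_comm]
  · obtain ⟨m, rfl⟩ := Nat.exists_eq_add_of_le' hm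
    rw [add_right_comm, card_edgeFinset_turanGraph_add, card_edgeFinset_turanGraph_add,
      ih m (by omega), Nat.add_div_right _ hr, Nat.succ_mul]
    have := Nat.div_le_self m r
    omega

lemma choose_add_card_edgeFinset_turanGraph_le {r : ℕ} (hr : 2 ≤ r) (m : ℕ) :
    (r + 1).choose 2 + m * (r - 1) + #(turanGraph m r).edgeFinset + (if m = r + 1 then 1 else 0)
      ≤ #(turanGraph (m + (r + 1)) r).edgeFinset + (if m + (r + 1) = r + 1 then 1 else 0) := by
  rw [show m + (r + 1) = m + 1 + r by ring, card_edgeFinset_turanGraph_add,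
    card_edgeFinset_turanGraph_succ (by omega), Nat.choose_succ_left _ _ two_pos, Nat.succ_mul]
  have : m / r ≤ m / 2 := Nat.div_le_div_left hr two_pos
  simp only [Nat.reduceSub, Nat.choose_one_right]
  split_ifs <;> omega

lemma card_edgeFinset_le_of_card_adj_le {V : Type*} [Fintype V] [DecidableEq V]
    (G : SimpleGraph V) [DecidableRel G.Adj] (Q : Finset V) {d : ℕ}
    (hd : ∀ v ∉ Q, #{w ∈ Q | G.Adj v w} ≤ d) :
    #G.edgeFinset ≤ (#Q).choose 2 + #Qᶜ * d + #(G.induce ↑Qᶜ).edgeFinset := by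
  have hinduce (s : Finset V) : #(G.induce ↑s).edgeFinset = #(G.edgeFinset ∩ s.sym2) := by
    have := congrArg card (map_edgeFinset_induce (G := G) (s := (s : Set V)))
    rw [card_map, Finset.toFinset_coe] at this
    convert this
  have hinside : #(G.edgeFinset ∩ Q.sym2) ≤ (#Q).choose 2 := by
    rw [← hinduce]
    simpa using card_edgeFinset_le_card_choose_two (G := G.induce ↑Q)
  have hmeet : G.edgeFinset \ Qᶜ.sym2 ⊆
      (G.edgeFinset ∩ Q.sym2) ∪ Qᶜ.biUnion fun v ↦ {w ∈ Q | G.Adj v w}.image fun w ↦ s(v, w) := by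
    intro e he
    induction e using Sym2.ind with | _ x y => ?_
    simp only [mem_sdiff, mem_edgeFinset, mem_edgeSet, mk_mem_sym2_iff, mem_compl] at he
    by_cases hx : x ∈ Q <;> by_cases hy : y ∈ Q
    · simp [he.1, hx, hy]
    · exact mem_union_right _ <| mem_biUnion.mpr
        ⟨y, mem_compl.mpr hy, mem_image.mpr ⟨x, mem_filter.mpr ⟨hx, he.1.symm⟩, Sym2.eq_swap⟩⟩
    · exact mem_union_right _ <| mem_biUnion.mpr
        ⟨x, mem_compl.mpr hx, mem_image.mpr ⟨y, mem_filter.mpr ⟨hy, he.1⟩, rfl⟩⟩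
    · exact absurd ⟨hx, hy⟩ he.2
  rw [← card_inter_add_card_sdiff G.edgeFinset Qᶜ.sym2, ← hinduce]
  have := (card_le_card hmeet).trans (card_union_le _ _)
  have := card_biUnion_le_card_mul Qᶜ (fun v ↦ {w ∈ Q | G.Adj v w}.image fun w ↦ s(v, w)) d
    fun v hv ↦ card_image_le.trans (hd v (mem_compl.mp hv))
  omega

/-- The correction term is needed: `K_{r+1}` itself is `(K_{r+2} - e)`-free. -/
theorem card_edgeFinset_le_of_cliqueMinusEdge_free {r n : ℕ} (hr : 2 ≤ r) {V : Type*} [Fintype V]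
    (hV : Fintype.card V = n) (G : SimpleGraph V) [DecidableRel G.Adj]
    (hG : (cliqueMinusEdge r).Free G) :
    #G.edgeFinset ≤ #(turanGraph n r).edgeFinset + if n = r + 1 then 1 else 0 := by
  induction n using Nat.strong_induction_on generalizing V with | _ n ih =>
  by_cases hcf : G.CliqueFree (r + 1)
  · subst hV
    exact (hcf.card_edgeFinset_le.trans_eq card_edgeFinset_turanGraph.symm).trans le_self_add
  obtain ⟨Q, hQ⟩ := _root_.not_forall_not.mp hcf
  have hQn : r + 1 ≤ n := hV ▸ hQ.card_eq ▸ card_le_univ Q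
  have hcompl : Fintype.card ↥(↑Qᶜ : Set V) = n - (r + 1) :=
    (Fintype.card_coe Qᶜ).trans (by rw [card_compl, hV, hQ.card_eq])
  have hrest := ih _ (by omega) hcompl (G.induce ↑Qᶜ) fun h ↦ hG (h.trans ⟨Copy.induce G _⟩)
  have hsplit := card_edgeFinset_le_of_card_adj_le G Q (d := r - 1)
    fun v hv ↦ card_adj_le_of_cliqueMinusEdge_free hG hQ hv
  have hstep := choose_add_card_edgeFinset_turanGraph_le hr (n - (r + 1))
  rw [card_compl, hV, hQ.card_eq] at hsplit
  rw [Nat.sub_add_cancel hQn] at hstep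
  omega

lemma containsCopy_iff_isContained {V W : Type*} {G : SimpleGraph V} {H : SimpleGraph W} :
    ContainsCopy G H ↔ H ⊑ G :=
  ⟨fun ⟨f, hf, hadj⟩ ↦ ⟨⟨⟨f, hadj _ _⟩, hf⟩⟩, fun ⟨f⟩ ↦ ⟨f, f.injective, fun _ _ ↦ f.toHom.map_adj⟩⟩

lemma exNumH_eq_extremalNumber (n : ℕ) {W : Type*} (H : SimpleGraph W) :
    exNumH n H = extremalNumber n H := by
  have hub : extremalNumber n H ∈ upperBounds
      {e | ∃ G : SimpleGraph (Fin n), ¬ ContainsCopy G H ∧ G.edgeSet.ncard = e} := by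
    rintro _ ⟨G, hG, rfl⟩
    rw [← coe_edgeFinset, Set.ncard_coe_finset]
    simpa using card_edgeFinset_le_extremalNumber (containsCopy_iff_isContained.not.mp hG)
  refine le_antisymm (csSup_le' hub) ?_
  have hle := extremalNumber_le_iff (V := Fin n) H (exNumH n H)
  rw [Fintype.card_fin] at hle
  refine hle.mpr fun G _ hG ↦ le_csSup ⟨_, hub⟩ ⟨G, containsCopy_iff_isContained.not.mpr hG, ?_⟩
  rw [← coe_edgeFinset, Set.ncard_coe_finset]

lemma exNum_eq_extremalNumber_top (n m : ℕ) :
    exNum n m = extremalNumber n (⊤ : SimpleGraph (Fin m)) := by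
  have hfree (G : SimpleGraph (Fin n)) :
      G.CliqueFree m ↔ ¬ ContainsCopy G (⊤ : SimpleGraph (Fin m)) := by
    simpa [containsCopy_iff_isContained] using cliqueFree_iff_top_free (G := G) (β := Fin m)
  simp_rw [← exNumH_eq_extremalNumber, exNum, exNumH, hfree]

lemma extremalNumber_top_fin_succ {r : ℕ} (hr : 0 < r) (n : ℕ) :
    extremalNumber n (⊤ : SimpleGraph (Fin (r + 1))) = #(turanGraph n r).edgeFinset := by
  have : Nontrivial (Fin (r + 1)) := Fin.nontrivial_iff_two_le.mpr (by omega)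
  rw [extremalNumber_top, Fintype.card_fin, Nat.add_sub_cancel]

lemma extremalNumber_cliqueMinusEdge {r n : ℕ} (hr : 2 ≤ r) (hn : n ≠ r + 1) :
    extremalNumber n (cliqueMinusEdge r) = extremalNumber n (⊤ : SimpleGraph (Fin (r + 1))) := by
  refine le_antisymm ?_ (top_isContained_cliqueMinusEdge r).extremalNumber_le
  have hle := extremalNumber_le_iff (V := Fin n) (cliqueMinusEdge r) #(turanGraph n r).edgeFinset
  rw [Fintype.card_fin] at hle
  rw [extremalNumber_top_fin_succ (by omega)]
  refine hle.mpr fun G _ hG ↦ ?_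
  simpa [hn] using card_edgeFinset_le_of_cliqueMinusEdge_free hr (Fintype.card_fin n) G hG

/-- Dirac: if `k ≥ 4` and `n ≥ k + 1`, then
`ex(K_n, K_k - e) = ex(K_n, K_{k-1}) = e(T_{n,k-2})`. -/
theorem dirac_ex_clique_minus_edge (k n : ℕ) (hk : 4 ≤ k) (hn : k + 1 ≤ n) :
    exNumH n ((⊤ : SimpleGraph (Fin k)).deleteEdges
        {s((⟨0, by omega⟩ : Fin k), (⟨1, by omega⟩ : Fin k))}) = exNum n (k - 1) ∧
    exNum n (k - 1) = (SimpleGraph.turanGraph n (k - 2)).edgeSet.ncard := by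
  obtain ⟨r, rfl⟩ : ∃ r, k = r + 2 := ⟨k - 2, by omega⟩
  refine ⟨?_, ?_⟩
  · change exNumH n (cliqueMinusEdge r) = _
    rw [exNumH_eq_extremalNumber, exNum_eq_extremalNumber_top,
      extremalNumber_cliqueMinusEdge (by omega) (by omega)]
  · rw [exNum_eq_extremalNumber_top, ← coe_edgeFinset, Set.ncard_coe_finset]
    exact extremalNumber_top_fin_succ (by omega) n
end
end

section
/- Let G be an edge-colored graph with coloring c, let u, v be nonadjacent with N_G(u) = N_G(v), and let c′ be the symmetrization of c at v to u. If two vertices x, y ∈ V(G) \ {v} are symmetric in G^c, then x and y are symmetric in G^{c′}. -/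
open Classical

noncomputable section

/-- The symmetrization of the coloring `c` at `v` to `u`: every edge `vx` is recolored
by `c (ux)` if `c (ux)` is not saturated by `u`, and by the fresh color `σ (c (ux))`
otherwise; all other edges keep their colors. -/
noncomputable def symmetrize {V : Type*} (G : SimpleGraph V) (c : Sym2 V → ℕ) (u v : V)
    (σ : ℕ → ℕ) : Sym2 V → ℕ :=
  fun e =>
    if h : e ∈ G.edgeSet ∧ v ∈ e then
      if Saturates G c u (c s(u, Sym2.Mem.other h.2)) then σ (c s(u, Sym2.Mem.other h.2))
      else c s(u, Sym2.Mem.other h.2)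
    else c e

/-- Two vertices `x, y` are symmetric in the edge-colored graph `G^c`. -/
def SymmetricVerts {V : Type*} (G : SimpleGraph V) (c : Sym2 V → ℕ) (x y : V) : Prop :=
  G.neighborSet x = G.neighborSet y ∧
  ∃ σ : ℕ → ℕ, Set.BijOn σ (satColors G c x) (satColors G c y) ∧
    ∀ z ∈ G.neighborSet x,
      (c s(x, z) ∉ satColors G c x → c s(y, z) = c s(x, z)) ∧
      (c s(x, z) ∈ satColors G c x → c s(y, z) = σ (c s(x, z)))

namespace SymmetrizeAux

variable {V : Type*} {G : SimpleGraph V} {c : Sym2 V → ℕ} {u v : V} {σ : ℕ → ℕ}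

lemma symmetrize_eq_of_not {e : Sym2 V} (h : e ∉ G.edgeSet ∨ v ∉ e) :
    symmetrize G c u v σ e = c e := by
  simp only [symmetrize]
  rw [dif_neg]
  rintro ⟨h1, h2⟩
  rcases h with h | h
  · exact h h1
  · exact h h2

lemma symmetrize_vz {z : V} (hz : G.Adj v z) :
    symmetrize G c u v σ s(v, z) =
      if Saturates G c u (c s(u, z)) then σ (c s(u, z)) else c s(u, z) := by
  have h : s(v, z) ∈ G.edgeSet ∧ v ∈ s(v, z) :=
    ⟨G.mem_edgeSet.mpr hz, Sym2.mem_mk_left v z⟩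
  have ho : Sym2.Mem.other h.2 = z := Sym2.congr_right.mp (Sym2.other_spec h.2)
  simp only [symmetrize, dif_pos h, ho]

lemma mem_of_mem_v {e : Sym2 V} (he : e ∈ G.edgeSet) {w : V} (hv : w ∈ e) :
    ∃ z, G.Adj w z ∧ e = s(w, z) := by
  have hs : s(w, Sym2.Mem.other hv) = e := Sym2.other_spec hv
  rw [← hs] at he
  exact ⟨Sym2.Mem.other hv, G.mem_edgeSet.mp he, hs.symm⟩

lemma sat_mem_image {w : V} {a : ℕ} (h : a ∈ satColors G c w) : a ∈ c '' G.edgeSet := by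
  obtain ⟨⟨e, he, hce⟩, -⟩ := h
  exact ⟨e, he, hce⟩

lemma adj_iff (hN : G.neighborSet u = G.neighborSet v) (z : V) : G.Adj u z ↔ G.Adj v z := by
  rw [← SimpleGraph.mem_neighborSet, ← SimpleGraph.mem_neighborSet, hN]

lemma fresh_char (huv : ¬ G.Adj u v) (hN : G.neighborSet u = G.neighborSet v)
    (hinj : Set.InjOn σ (satColors G c u))
    (hfresh : ∀ a ∈ satColors G c u, σ a ∉ c '' G.edgeSet)
    {x : V} (hx : x ≠ v) {b : ℕ} (hb : b ∈ satColors G c u) :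
    σ b ∈ satColors G (symmetrize G c u v σ) x ↔
      ∀ e ∈ G.edgeSet, c e = b → e = s(u, x) := by
  constructor
  · rintro ⟨-, hall⟩ e he hce
    obtain ⟨w, huw, rfl⟩ := mem_of_mem_v he (hb.2 e he hce)
    have hvw : G.Adj v w := (adj_iff hN w).mp huw
    have hc' : symmetrize G c u v σ s(v, w) = σ b := by
      rw [symmetrize_vz hvw, hce, if_pos (show Saturates G c u b from hb)]
    have hxm := hall s(v, w) (G.mem_edgeSet.mpr hvw) hc'
    rcases Sym2.mem_iff.mp hxm with h | h
    · exact absurd h hx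
    · rw [h]
  · intro honly
    obtain ⟨e₀, he₀, hce₀⟩ := hb.1
    have he₀x : e₀ = s(u, x) := honly e₀ he₀ hce₀
    have hux : G.Adj u x := G.mem_edgeSet.mp (he₀x ▸ he₀)
    have hvx : G.Adj v x := (adj_iff hN x).mp hux
    have hcb : c s(u, x) = b := he₀x ▸ hce₀
    refine ⟨⟨s(v, x), G.mem_edgeSet.mpr hvx, ?_⟩, ?_⟩
    · rw [symmetrize_vz hvx, hcb, if_pos (show Saturates G c u b from hb)]
    · intro e he hce
      by_cases hve : v ∈ e
      · obtain ⟨z, hvz, rfl⟩ := mem_of_mem_v he hve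
        rw [symmetrize_vz hvz] at hce
        by_cases hs : Saturates G c u (c s(u, z))
        · rw [if_pos hs] at hce
          have hcz : c s(u, z) = b := hinj hs hb hce
          have := honly s(u, z) (G.mem_edgeSet.mpr ((adj_iff hN z).mpr hvz)) hcz
          have hzx : z = x := Sym2.congr_right.mp this
          rw [hzx]
          exact Sym2.mem_mk_right v x
        · rw [if_neg hs] at hce
          exact absurd ⟨s(u, z), G.mem_edgeSet.mpr ((adj_iff hN z).mpr hvz), hce⟩
            (hfresh b hb)
      · rw [symmetrize_eq_of_not (Or.inr hve)] at hce
        exact absurd ⟨e, he, hce⟩ (hfresh b hb)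

lemma nonfresh_char (huv : ¬ G.Adj u v) (hN : G.neighborSet u = G.neighborSet v)
    {x : V} (hx : x ≠ v) {a : ℕ}
    (hnf : ∀ b ∈ satColors G c u, σ b ≠ a) :
    a ∈ satColors G (symmetrize G c u v σ) x ↔
      ((∀ e ∈ G.edgeSet, v ∉ e → c e = a → x ∈ e) ∧
       (∀ z, G.Adj u z → c s(u, z) = a → a ∉ satColors G c u → z = x) ∧
       ((∃ e ∈ G.edgeSet, v ∉ e ∧ c e = a) ∨
        (a ∉ satColors G c u ∧ ∃ z, G.Adj u z ∧ c s(u, z) = a))) := by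
  constructor
  · rintro ⟨⟨e₀, he₀, hce₀⟩, hall⟩
    refine ⟨?_, ?_, ?_⟩
    · intro e he hve hce
      exact hall e he (by rw [symmetrize_eq_of_not (Or.inr hve)]; exact hce)
    · intro z huz hcz hau
      have hvz : G.Adj v z := (adj_iff hN z).mp huz
      have hsz : ¬ Saturates G c u (c s(u, z)) := by rw [hcz]; exact hau
      have : symmetrize G c u v σ s(v, z) = a := by
        rw [symmetrize_vz hvz, if_neg hsz]; exact hcz
      have hxm := hall s(v, z) (G.mem_edgeSet.mpr hvz) this
      rcases Sym2.mem_iff.mp hxm with h | h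
      · exact absurd h hx
      · exact h.symm
    · by_cases hve : v ∈ e₀
      · obtain ⟨z, hvz, rfl⟩ := mem_of_mem_v he₀ hve
        rw [symmetrize_vz hvz] at hce₀
        by_cases hs : Saturates G c u (c s(u, z))
        · rw [if_pos hs] at hce₀
          exact absurd hce₀ (hnf _ hs)
        · rw [if_neg hs] at hce₀
          exact Or.inr ⟨hce₀ ▸ hs, z, (adj_iff hN z).mpr hvz, hce₀⟩
      · rw [symmetrize_eq_of_not (Or.inr hve)] at hce₀
        exact Or.inl ⟨e₀, he₀, hve, hce₀⟩
  · rintro ⟨h1, h2, h3⟩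
    constructor
    · rcases h3 with ⟨e, he, hve, hce⟩ | ⟨hau, z, huz, hcz⟩
      · exact ⟨e, he, by rw [symmetrize_eq_of_not (Or.inr hve)]; exact hce⟩
      · have hvz : G.Adj v z := (adj_iff hN z).mp huz
        refine ⟨s(v, z), G.mem_edgeSet.mpr hvz, ?_⟩
        rw [symmetrize_vz hvz, if_neg (by rw [hcz]; exact hau)]
        exact hcz
    · intro e he hce
      by_cases hve : v ∈ e
      · obtain ⟨z, hvz, rfl⟩ := mem_of_mem_v he hve
        rw [symmetrize_vz hvz] at hce
        by_cases hs : Saturates G c u (c s(u, z))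
        · rw [if_pos hs] at hce
          exact absurd hce (hnf _ hs)
        · rw [if_neg hs] at hce
          have hzx : z = x := h2 z ((adj_iff hN z).mpr hvz) hce (hce ▸ hs)
          rw [hzx]
          exact Sym2.mem_mk_right v x
      · rw [symmetrize_eq_of_not (Or.inr hve)] at hce
        exact h1 e he hve hce

lemma not_mem_mk {p q r : V} (h1 : r ≠ p) (h2 : r ≠ q) : r ∉ s(p, q) := fun hm => by
  rcases Sym2.mem_iff.mp hm with h | h
  · exact h1 h
  · exact h2 h

lemma eq_of_two_mem {e : Sym2 V} (he : e ∈ G.edgeSet) {p q : V} (hp : p ∈ e) (hq : q ∈ e)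
    (hpq : p ≠ q) : e = s(p, q) := by
  obtain ⟨w, hpw, rfl⟩ := mem_of_mem_v he hp
  rcases Sym2.mem_iff.mp hq with h | h
  · exact absurd h.symm hpq
  · rw [h]

lemma transfer {x y : V} (hNxy : G.neighborSet x = G.neighborSet y)
    {σ₀ : ℕ → ℕ} (hmap : Set.MapsTo σ₀ (satColors G c x) (satColors G c y))
    (hinj₀ : Set.InjOn σ₀ (satColors G c x))
    (hcond : ∀ z ∈ G.neighborSet x,
      (c s(x, z) ∉ satColors G c x → c s(y, z) = c s(x, z)) ∧
      (c s(x, z) ∈ satColors G c x → c s(y, z) = σ₀ (c s(x, z))))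
    {b : ℕ} (hb : b ∈ satColors G c u)
    (honly : ∀ e ∈ G.edgeSet, c e = b → e = s(u, x)) :
    b ∈ satColors G c x ∧ G.Adj u y ∧
      σ₀ b ∈ satColors G c u ∧ (∀ e ∈ G.edgeSet, c e = σ₀ b → e = s(u, y)) ∧
      c s(u, y) = σ₀ b := by
  obtain ⟨e₀, he₀, hce₀⟩ := hb.1
  have he₀x : e₀ = s(u, x) := honly e₀ he₀ hce₀
  rw [he₀x] at he₀ hce₀
  have hux : G.Adj u x := G.mem_edgeSet.mp he₀
  have hbx : b ∈ satColors G c x :=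
    ⟨⟨s(u, x), he₀, hce₀⟩, fun e he hce => by
      rw [honly e he hce]; exact Sym2.mem_mk_right u x⟩
  have hxu : u ∈ G.neighborSet x := (G.mem_neighborSet _ _).mpr hux.symm
  have huy : G.Adj u y := ((G.mem_neighborSet _ _).mp (hNxy ▸ hxu : u ∈ G.neighborSet y)).symm
  have hsw : c s(x, u) = b := by rw [Sym2.eq_swap]; exact hce₀
  have hcyu : c s(y, u) = σ₀ b := by
    have := (hcond u hxu).2 (by rw [hsw]; exact hbx)
    rw [hsw] at this; exact this
  have hcuy : c s(u, y) = σ₀ b := by rw [Sym2.eq_swap]; exact hcyu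
  have hb'y : σ₀ b ∈ satColors G c y := hmap hbx
  have honly' : ∀ e ∈ G.edgeSet, c e = σ₀ b → e = s(u, y) := by
    intro e he hce
    have hye : y ∈ e := hb'y.2 e he hce
    obtain ⟨w, hyw, rfl⟩ := mem_of_mem_v he hye
    have hxw : G.Adj x w := by
      have : w ∈ G.neighborSet y := (G.mem_neighborSet _ _).mpr hyw
      rw [← hNxy] at this
      exact (G.mem_neighborSet _ _).mp this
    have hwx : w ∈ G.neighborSet x := (G.mem_neighborSet _ _).mpr hxw
    by_cases hcx : c s(x, w) ∈ satColors G c x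
    · have h2 := (hcond w hwx).2 hcx
      rw [hce] at h2
      have hcw : c s(x, w) = b := hinj₀ hcx hbx h2.symm
      have := honly s(x, w) (G.mem_edgeSet.mpr hxw) hcw
      have hwu : w = u := by
        rcases Sym2.eq_iff.mp this with ⟨hxu', hwx'⟩ | ⟨-, hwu⟩
        · rw [hwx', hxu']
        · exact hwu
      rw [hwu, Sym2.eq_swap]
    · have h1 := (hcond w hwx).1 hcx
      rw [hce] at h1
      have hcw : c s(x, w) = σ₀ b := h1.symm
      have hym : y ∈ s(x, w) := hb'y.2 _ (G.mem_edgeSet.mpr hxw) hcw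
      rcases Sym2.mem_iff.mp hym with h | h
      · subst h
        exact absurd (hcw ▸ hb'y) hcx
      · exact absurd h.symm hyw.ne'
  have hb'u : σ₀ b ∈ satColors G c u :=
    ⟨⟨s(u, y), G.mem_edgeSet.mpr huy, hcuy⟩, fun e he hce => by
      rw [honly' e he hce]; exact Sym2.mem_mk_left u y⟩
  exact ⟨hbx, huy, hb'u, honly', hcuy⟩

lemma extract (hne : u ≠ v) (huv : ¬ G.Adj u v) (hN : G.neighborSet u = G.neighborSet v)
    {x : V} (hx : x ≠ v) {a : ℕ} (hnf : ∀ b ∈ satColors G c u, σ b ≠ a)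
    (ha' : a ∈ satColors G (symmetrize G c u v σ) x) :
    ∃ w, G.Adj x w ∧ w ≠ v ∧ c s(x, w) = a := by
  obtain ⟨h1, h2, h3⟩ := (nonfresh_char huv hN hx hnf).mp ha'
  rcases h3 with ⟨e, he, hve, hce⟩ | ⟨hau, z, huz, hcz⟩
  · have hxe : x ∈ e := h1 e he hve hce
    obtain ⟨w, hxw, rfl⟩ := mem_of_mem_v he hxe
    refine ⟨w, hxw, fun hwv => hve (hwv ▸ Sym2.mem_mk_right x w), hce⟩
  · have hzx : z = x := h2 z huz hcz hau
    subst hzx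
    exact ⟨u, huz.symm, hne, by rw [Sym2.eq_swap]; exact hcz⟩

lemma case3 (hne : u ≠ v) (huv : ¬ G.Adj u v) (hN : G.neighborSet u = G.neighborSet v)
    {x y : V} (hx : x ≠ v) (hy : y ≠ v) (hNxy : G.neighborSet x = G.neighborSet y)
    {σ₀ : ℕ → ℕ}
    (hcond : ∀ z ∈ G.neighborSet x,
      (c s(x, z) ∉ satColors G c x → c s(y, z) = c s(x, z)) ∧
      (c s(x, z) ∈ satColors G c x → c s(y, z) = σ₀ (c s(x, z))))
    {a : ℕ} (hnf : ∀ b ∈ satColors G c u, σ b ≠ a)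
    (ha' : a ∈ satColors G (symmetrize G c u v σ) x) (hax : a ∉ satColors G c x) :
    x = y := by
  obtain ⟨w, hxw, hwv, hcw⟩ := extract hne huv hN hx hnf ha'
  have hwx : w ∈ G.neighborSet x := (G.mem_neighborSet _ _).mpr hxw
  have hcyw : c s(y, w) = a := by
    have := (hcond w hwx).1 (by rw [hcw]; exact hax)
    rw [hcw] at this; exact this
  have hyw : G.Adj y w := (G.mem_neighborSet _ _).mp (hNxy ▸ hwx)
  have h1 := ((nonfresh_char huv hN hx hnf).mp ha').1
  have hxm : x ∈ s(y, w) :=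
    h1 s(y, w) (G.mem_edgeSet.mpr hyw) (not_mem_mk (Ne.symm hy) (Ne.symm hwv)) hcyw
  rcases Sym2.mem_iff.mp hxm with h | h
  · exact h
  · exact absurd h hxw.ne

lemma sat_persist (huv : ¬ G.Adj u v) (hN : G.neighborSet u = G.neighborSet v)
    (hfresh : ∀ a ∈ satColors G c u, σ a ∉ c '' G.edgeSet)
    {x : V} (hx : x ≠ v) {a : ℕ} (ha : a ∈ satColors G c x)
    (hw : ∃ w, G.Adj x w ∧ w ≠ v ∧ c s(x, w) = a) :
    a ∈ satColors G (symmetrize G c u v σ) x := by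
  have hnf : ∀ b ∈ satColors G c u, σ b ≠ a := fun b hb hba =>
    hfresh b hb (hba ▸ sat_mem_image ha)
  refine (nonfresh_char huv hN hx hnf).mpr ⟨?_, ?_, ?_⟩
  · intro e he _ hce; exact ha.2 e he hce
  · intro z huz hcz hau
    have hxm : x ∈ s(u, z) := ha.2 _ (G.mem_edgeSet.mpr huz) hcz
    rcases Sym2.mem_iff.mp hxm with h | h
    · subst h; exact absurd ha hau
    · exact h.symm
  · obtain ⟨w, hxw, hwv, hcw⟩ := hw
    exact Or.inl ⟨s(x, w), G.mem_edgeSet.mpr hxw, not_mem_mk (Ne.symm hx) (Ne.symm hwv), hcw⟩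

lemma sat_partner (huv : ¬ G.Adj u v) (hN : G.neighborSet u = G.neighborSet v)
    (hfresh : ∀ a ∈ satColors G c u, σ a ∉ c '' G.edgeSet)
    {x y : V} (hy : y ≠ v) (hNxy : G.neighborSet x = G.neighborSet y)
    {σ₀ : ℕ → ℕ} (hmap : Set.MapsTo σ₀ (satColors G c x) (satColors G c y))
    (hcond : ∀ z ∈ G.neighborSet x,
      (c s(x, z) ∉ satColors G c x → c s(y, z) = c s(x, z)) ∧
      (c s(x, z) ∈ satColors G c x → c s(y, z) = σ₀ (c s(x, z))))
    {a : ℕ} (ha : a ∈ satColors G c x)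
    (hw : ∃ w, G.Adj x w ∧ w ≠ v ∧ c s(x, w) = a) :
    σ₀ a ∈ satColors G (symmetrize G c u v σ) y := by
  have ha' : σ₀ a ∈ satColors G c y := hmap ha
  have hnf' : ∀ b ∈ satColors G c u, σ b ≠ σ₀ a := fun b hb hba =>
    hfresh b hb (hba ▸ sat_mem_image ha')
  obtain ⟨w, hxw, hwv, hcw⟩ := hw
  have hwx : w ∈ G.neighborSet x := (G.mem_neighborSet _ _).mpr hxw
  have hyw : G.Adj y w := (G.mem_neighborSet _ _).mp (hNxy ▸ hwx)
  have hcyw : c s(y, w) = σ₀ a := by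
    have := (hcond w hwx).2 (by rw [hcw]; exact ha)
    rw [hcw] at this; exact this
  refine (nonfresh_char huv hN hy hnf').mpr ⟨?_, ?_,
    Or.inl ⟨s(y, w), G.mem_edgeSet.mpr hyw, not_mem_mk (Ne.symm hy) (Ne.symm hwv), hcyw⟩⟩
  · intro e he _ hce; exact ha'.2 e he hce
  · intro z huz hcz hau
    have hym : y ∈ s(u, z) := ha'.2 _ (G.mem_edgeSet.mpr huz) hcz
    rcases Sym2.mem_iff.mp hym with h | h
    · subst h; exact absurd ha' hau
    · exact h.symm

noncomputable def symmMap (G : SimpleGraph V) (c : Sym2 V → ℕ) (u x : V)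
    (σ σ₀ : ℕ → ℕ) (a : ℕ) : ℕ :=
  if h : ∃ b ∈ satColors G c u, σ b = a then σ (σ₀ h.choose)
  else if a ∈ satColors G c x then σ₀ a else a

lemma mapsTo_main (hne : u ≠ v) (huv : ¬ G.Adj u v) (hN : G.neighborSet u = G.neighborSet v)
    (hinj : Set.InjOn σ (satColors G c u))
    (hfresh : ∀ a ∈ satColors G c u, σ a ∉ c '' G.edgeSet)
    {x y : V} (hx : x ≠ v) (hy : y ≠ v) (hNxy : G.neighborSet x = G.neighborSet y)
    {σ₀ : ℕ → ℕ} (hmap : Set.MapsTo σ₀ (satColors G c x) (satColors G c y))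
    (hinj₀ : Set.InjOn σ₀ (satColors G c x))
    (hcond : ∀ z ∈ G.neighborSet x,
      (c s(x, z) ∉ satColors G c x → c s(y, z) = c s(x, z)) ∧
      (c s(x, z) ∈ satColors G c x → c s(y, z) = σ₀ (c s(x, z)))) :
    Set.MapsTo (symmMap G c u x σ σ₀) (satColors G (symmetrize G c u v σ) x)
      (satColors G (symmetrize G c u v σ) y) := by
  intro a ha'
  by_cases h : ∃ b ∈ satColors G c u, σ b = a
  · simp only [symmMap, dif_pos h]
    obtain ⟨hbu, hba⟩ := h.choose_spec
    have hfc := (fresh_char huv hN hinj hfresh hx hbu).mp (by rw [hba]; exact ha')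
    obtain ⟨hbx, huy, hb'u, honly', hcuy⟩ := transfer hNxy hmap hinj₀ hcond hbu hfc
    exact (fresh_char huv hN hinj hfresh hy hb'u).mpr honly'
  · have hnf : ∀ b ∈ satColors G c u, σ b ≠ a := fun b hb hba => h ⟨b, hb, hba⟩
    simp only [symmMap, dif_neg h]
    by_cases hax : a ∈ satColors G c x
    · rw [if_pos hax]
      exact sat_partner huv hN hfresh hy hNxy hmap hcond hax
        (extract hne huv hN hx hnf ha')
    · rw [if_neg hax]
      have hxy2 : x = y := case3 hne huv hN hx hy hNxy hcond hnf ha' hax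
      rw [← hxy2]
      exact ha'

lemma injOn_main (hne : u ≠ v) (huv : ¬ G.Adj u v) (hN : G.neighborSet u = G.neighborSet v)
    (hinj : Set.InjOn σ (satColors G c u))
    (hfresh : ∀ a ∈ satColors G c u, σ a ∉ c '' G.edgeSet)
    {x y : V} (hx : x ≠ v) (hy : y ≠ v) (hNxy : G.neighborSet x = G.neighborSet y)
    {σ₀ : ℕ → ℕ} (hmap : Set.MapsTo σ₀ (satColors G c x) (satColors G c y))
    (hinj₀ : Set.InjOn σ₀ (satColors G c x))
    (hcond : ∀ z ∈ G.neighborSet x,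
      (c s(x, z) ∉ satColors G c x → c s(y, z) = c s(x, z)) ∧
      (c s(x, z) ∈ satColors G c x → c s(y, z) = σ₀ (c s(x, z)))) :
    Set.InjOn (symmMap G c u x σ σ₀) (satColors G (symmetrize G c u v σ) x) := by
  -- helper: the value of symmMap on a fresh color, with data
  have freshdata : ∀ {a : ℕ} (h : ∃ b ∈ satColors G c u, σ b = a),
      a ∈ satColors G (symmetrize G c u v σ) x →
      h.choose ∈ satColors G c x ∧ σ₀ h.choose ∈ satColors G c u := by
    intro a h ha'
    obtain ⟨hbu, hba⟩ := h.choose_spec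
    have hfc := (fresh_char huv hN hinj hfresh hx hbu).mp (by rw [hba]; exact ha')
    obtain ⟨hbx, -, hb'u, -, -⟩ := transfer hNxy hmap hinj₀ hcond hbu hfc
    exact ⟨hbx, hb'u⟩
  have nonfresh_img : ∀ {a : ℕ}, (¬ ∃ b ∈ satColors G c u, σ b = a) →
      a ∈ satColors G (symmetrize G c u v σ) x →
      symmMap G c u x σ σ₀ a ∈ c '' G.edgeSet := by
    intro a h ha'
    have hnf : ∀ b ∈ satColors G c u, σ b ≠ a := fun b hb hba => h ⟨b, hb, hba⟩
    simp only [symmMap, dif_neg h]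
    by_cases hax : a ∈ satColors G c x
    · rw [if_pos hax]; exact sat_mem_image (hmap hax)
    · rw [if_neg hax]
      obtain ⟨w, hxw, -, hcw⟩ := extract hne huv hN hx hnf ha'
      exact ⟨s(x, w), G.mem_edgeSet.mpr hxw, hcw⟩
  intro a₁ h₁ a₂ h₂ heq
  by_cases k₁ : ∃ b ∈ satColors G c u, σ b = a₁ <;>
    by_cases k₂ : ∃ b ∈ satColors G c u, σ b = a₂
  · obtain ⟨hb₁x, hb₁'u⟩ := freshdata k₁ h₁
    obtain ⟨hb₂x, hb₂'u⟩ := freshdata k₂ h₂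
    simp only [symmMap, dif_pos k₁, dif_pos k₂] at heq
    have h3 : σ₀ k₁.choose = σ₀ k₂.choose := hinj hb₁'u hb₂'u heq
    have h4 : k₁.choose = k₂.choose := hinj₀ hb₁x hb₂x h3
    rw [← k₁.choose_spec.2, ← k₂.choose_spec.2, h4]
  · obtain ⟨hb₁x, hb₁'u⟩ := freshdata k₁ h₁
    have val₁ : symmMap G c u x σ σ₀ a₁ = σ (σ₀ k₁.choose) := by
      simp only [symmMap, dif_pos k₁]
    have him := nonfresh_img k₂ h₂
    rw [← heq, val₁] at him
    exact absurd him (hfresh _ hb₁'u)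
  · obtain ⟨hb₂x, hb₂'u⟩ := freshdata k₂ h₂
    have val₂ : symmMap G c u x σ σ₀ a₂ = σ (σ₀ k₂.choose) := by
      simp only [symmMap, dif_pos k₂]
    have him := nonfresh_img k₁ h₁
    rw [heq, val₂] at him
    exact absurd him (hfresh _ hb₂'u)
  · have hnf₁ : ∀ b ∈ satColors G c u, σ b ≠ a₁ := fun b hb hba => k₁ ⟨b, hb, hba⟩
    have hnf₂ : ∀ b ∈ satColors G c u, σ b ≠ a₂ := fun b hb hba => k₂ ⟨b, hb, hba⟩
    simp only [symmMap, dif_neg k₁, dif_neg k₂] at heq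
    by_cases hax₁ : a₁ ∈ satColors G c x <;> by_cases hax₂ : a₂ ∈ satColors G c x
    · rw [if_pos hax₁, if_pos hax₂] at heq
      exact hinj₀ hax₁ hax₂ heq
    · rw [if_pos hax₁, if_neg hax₂] at heq
      have hxy2 : x = y := case3 hne huv hN hx hy hNxy hcond hnf₂ h₂ hax₂
      subst hxy2
      exact absurd (heq ▸ hmap hax₁) hax₂
    · rw [if_neg hax₁, if_pos hax₂] at heq
      have hxy2 : x = y := case3 hne huv hN hx hy hNxy hcond hnf₁ h₁ hax₁
      subst hxy2
      exact absurd (heq ▸ hmap hax₂) hax₁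
    · rw [if_neg hax₁, if_neg hax₂] at heq
      exact heq

lemma rev_cond {x y : V} (hNxy : G.neighborSet x = G.neighborSet y)
    {σ₀ : ℕ → ℕ} (hbij : Set.BijOn σ₀ (satColors G c x) (satColors G c y))
    (hcond : ∀ z ∈ G.neighborSet x,
      (c s(x, z) ∉ satColors G c x → c s(y, z) = c s(x, z)) ∧
      (c s(x, z) ∈ satColors G c x → c s(y, z) = σ₀ (c s(x, z)))) :
    ∀ z ∈ G.neighborSet y,
      (c s(y, z) ∉ satColors G c y →
        c s(x, z) = c s(y, z)) ∧
      (c s(y, z) ∈ satColors G c y →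
        c s(x, z) = Function.invFunOn σ₀ (satColors G c x) (c s(y, z))) := by
  intro z hzy
  have hzx : z ∈ G.neighborSet x := hNxy ▸ hzy
  have hyz : G.Adj y z := (G.mem_neighborSet _ _).mp hzy
  constructor
  · intro hny
    by_cases hcx : c s(x, z) ∈ satColors G c x
    · exact absurd ((hcond z hzx).2 hcx ▸ hbij.mapsTo hcx) hny
    · exact ((hcond z hzx).1 hcx).symm
  · intro hsy
    by_cases hcx : c s(x, z) ∈ satColors G c x
    · rw [(hcond z hzx).2 hcx]
      exact (hbij.injOn.leftInvOn_invFunOn hcx).symm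
    · have h1 := (hcond z hzx).1 hcx
      have hmem : y ∈ s(x, z) := hsy.2 _ (G.mem_edgeSet.mpr ((G.mem_neighborSet _ _).mp hzx)) h1.symm
      rcases Sym2.mem_iff.mp hmem with h | h
      · subst h
        exact absurd (h1 ▸ hsy) hcx
      · exact absurd h.symm hyz.ne'

lemma surjOn_main (hne : u ≠ v) (huv : ¬ G.Adj u v) (hN : G.neighborSet u = G.neighborSet v)
    (hinj : Set.InjOn σ (satColors G c u))
    (hfresh : ∀ a ∈ satColors G c u, σ a ∉ c '' G.edgeSet)
    {x y : V} (hx : x ≠ v) (hy : y ≠ v) (hNxy : G.neighborSet x = G.neighborSet y)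
    {σ₀ : ℕ → ℕ} (hbij : Set.BijOn σ₀ (satColors G c x) (satColors G c y))
    (hcond : ∀ z ∈ G.neighborSet x,
      (c s(x, z) ∉ satColors G c x → c s(y, z) = c s(x, z)) ∧
      (c s(x, z) ∈ satColors G c x → c s(y, z) = σ₀ (c s(x, z)))) :
    Set.SurjOn (symmMap G c u x σ σ₀) (satColors G (symmetrize G c u v σ) x)
      (satColors G (symmetrize G c u v σ) y) := by
  set τ₀ := Function.invFunOn σ₀ (satColors G c x) with hτ
  have hinv : Set.InvOn τ₀ σ₀ (satColors G c x) (satColors G c y) := hbij.invOn_invFunOn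
  have hbijτ : Set.BijOn τ₀ (satColors G c y) (satColors G c x) := hbij.symm hinv.symm
  have hcondτ := rev_cond hNxy hbij hcond
  intro a' ha'
  have hmem : symmMap G c u y σ τ₀ a' ∈ satColors G (symmetrize G c u v σ) x :=
    mapsTo_main hne huv hN hinj hfresh hy hx hNxy.symm hbijτ.mapsTo hbijτ.injOn hcondτ ha'
  refine ⟨symmMap G c u y σ τ₀ a', hmem, ?_⟩
  by_cases h' : ∃ b ∈ satColors G c u, σ b = a'
  · obtain ⟨hb'u, hba'⟩ := h'.choose_spec
    have hfc := (fresh_char huv hN hinj hfresh hy hb'u).mp (by rw [hba']; exact ha')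
    obtain ⟨hb'y, hux, hτu, honlyx, hcux⟩ :=
      transfer hNxy.symm hbijτ.mapsTo hbijτ.injOn hcondτ hb'u hfc
    have val : symmMap G c u y σ τ₀ a' = σ (τ₀ h'.choose) := by
      simp only [symmMap, dif_pos h']
    rw [val]
    have h2 : ∃ b ∈ satColors G c u, σ b = σ (τ₀ h'.choose) := ⟨τ₀ h'.choose, hτu, rfl⟩
    have val2 : symmMap G c u x σ σ₀ (σ (τ₀ h'.choose)) = σ (σ₀ h2.choose) := by
      simp only [symmMap, dif_pos h2]
    rw [val2]
    have h3 : h2.choose = τ₀ h'.choose := hinj h2.choose_spec.1 hτu h2.choose_spec.2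
    rw [h3, hinv.2 hb'y, hba']
  · have hnf' : ∀ b ∈ satColors G c u, σ b ≠ a' := fun b hb hba => h' ⟨b, hb, hba⟩
    by_cases ha'y : a' ∈ satColors G c y
    · have val : symmMap G c u y σ τ₀ a' = τ₀ a' := by
        simp only [symmMap, dif_neg h', if_pos ha'y]
      rw [val]
      have hτx : τ₀ a' ∈ satColors G c x := hbijτ.mapsTo ha'y
      have h3 : ¬ ∃ b ∈ satColors G c u, σ b = τ₀ a' := by
        rintro ⟨b, hb, hba⟩
        exact hfresh b hb (hba ▸ sat_mem_image hτx)
      simp only [symmMap, dif_neg h3, if_pos hτx]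
      exact hinv.2 ha'y
    · have hxy2 : y = x :=
        case3 hne huv hN hy hx hNxy.symm hcondτ hnf' ha' ha'y
      have val : symmMap G c u y σ τ₀ a' = a' := by
        simp only [symmMap, dif_neg h', if_neg ha'y]
      rw [val]
      have hax : a' ∉ satColors G c x := by rw [← hxy2]; exact ha'y
      simp only [symmMap, dif_neg h', if_neg hax]

theorem symmetricVerts_symmetrize' {V : Type*} (G : SimpleGraph V) (c : Sym2 V → ℕ)
    (u v : V) (huv : ¬ G.Adj u v) (hne : u ≠ v) (hN : G.neighborSet u = G.neighborSet v)
    (σ : ℕ → ℕ) (hinj : Set.InjOn σ (satColors G c u))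
    (hfresh : ∀ a ∈ satColors G c u, σ a ∉ c '' G.edgeSet)
    (x y : V) (hx : x ≠ v) (hy : y ≠ v)
    (hNxy : G.neighborSet x = G.neighborSet y)
    (σ₀ : ℕ → ℕ) (hbij : Set.BijOn σ₀ (satColors G c x) (satColors G c y))
    (hcond : ∀ z ∈ G.neighborSet x,
      (c s(x, z) ∉ satColors G c x → c s(y, z) = c s(x, z)) ∧
      (c s(x, z) ∈ satColors G c x → c s(y, z) = σ₀ (c s(x, z)))) :
    Set.BijOn (symmMap G c u x σ σ₀) (satColors G (symmetrize G c u v σ) x)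
        (satColors G (symmetrize G c u v σ) y) ∧
      ∀ z ∈ G.neighborSet x,
        (symmetrize G c u v σ s(x, z) ∉ satColors G (symmetrize G c u v σ) x →
          symmetrize G c u v σ s(y, z) = symmetrize G c u v σ s(x, z)) ∧
        (symmetrize G c u v σ s(x, z) ∈ satColors G (symmetrize G c u v σ) x →
          symmetrize G c u v σ s(y, z) = symmMap G c u x σ σ₀ (symmetrize G c u v σ s(x, z))) := by
  refine ⟨
    ⟨mapsTo_main hne huv hN hinj hfresh hx hy hNxy hbij.mapsTo hbij.injOn hcond,
     injOn_main hne huv hN hinj hfresh hx hy hNxy hbij.mapsTo hbij.injOn hcond,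
     surjOn_main hne huv hN hinj hfresh hx hy hNxy hbij hcond⟩, ?_⟩
  intro z hz
  by_cases hzv : z = v
  · rw [hzv] at hz ⊢
    have hxv : G.Adj x v := (G.mem_neighborSet _ _).mp hz
    have hvx : G.Adj v x := hxv.symm
    have hux : G.Adj u x := (adj_iff hN x).mpr hvx
    have hyv : G.Adj y v := (G.mem_neighborSet _ _).mp (hNxy ▸ hz)
    have hvy : G.Adj v y := hyv.symm
    have huy : G.Adj u y := (adj_iff hN y).mpr hvy
    have hxu : x ≠ u := fun h => huv (h ▸ hxv)
    have hyu : y ≠ u := fun h => huv (h ▸ hyv)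
    have hxNu : u ∈ G.neighborSet x := (G.mem_neighborSet _ _).mpr hux.symm
    have hcx' : symmetrize G c u v σ s(x, v) =
        if Saturates G c u (c s(u, x)) then σ (c s(u, x)) else c s(u, x) := by
      rw [Sym2.eq_swap]; exact symmetrize_vz hvx
    have hcy' : symmetrize G c u v σ s(y, v) =
        if Saturates G c u (c s(u, y)) then σ (c s(u, y)) else c s(u, y) := by
      rw [Sym2.eq_swap]; exact symmetrize_vz hvy
    have hswx : c s(x, u) = c s(u, x) := congrArg c Sym2.eq_swap
    by_cases hbu : Saturates G c u (c s(u, x))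
    · rw [if_pos hbu] at hcx'
      have hbu' : c s(u, x) ∈ satColors G c u := hbu
      by_cases honly : ∀ e ∈ G.edgeSet, c e = c s(u, x) → e = s(u, x)
      · have hmem : σ (c s(u, x)) ∈ satColors G (symmetrize G c u v σ) x :=
          (fresh_char huv hN hinj hfresh hx hbu').mpr honly
        obtain ⟨hbx, huy', hb'u, honly', hcuy⟩ :=
          transfer hNxy hbij.mapsTo hbij.injOn hcond hbu' honly
        constructor
        · intro hnot; rw [hcx'] at hnot; exact absurd hmem hnot
        · intro _
          rw [hcx', hcy', hcuy,
            if_pos (show Saturates G c u (σ₀ (c s(u, x))) from hb'u)]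
          have h2 : ∃ b ∈ satColors G c u, σ b = σ (c s(u, x)) := ⟨_, hbu', rfl⟩
          have val2 : symmMap G c u x σ σ₀ (σ (c s(u, x))) = σ (σ₀ h2.choose) := by
            simp only [symmMap, dif_pos h2]
          rw [val2, hinj h2.choose_spec.1 hbu' h2.choose_spec.2]
      · push_neg at honly
        obtain ⟨e, he, hce, hnee⟩ := honly
        have hnotmem : σ (c s(u, x)) ∉ satColors G (symmetrize G c u v σ) x := by
          intro hm
          exact hnee (((fresh_char huv hN hinj hfresh hx hbu').mp hm) e he hce)
        obtain ⟨w, huw, rfl⟩ := mem_of_mem_v he (hbu.2 e he hce)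
        have hwx : w ≠ x := fun h => hnee (by rw [h])
        have hbnx : c s(u, x) ∉ satColors G c x := by
          intro hbx
          have := hbx.2 _ he hce
          rcases Sym2.mem_iff.mp this with h | h
          · exact hxu h
          · exact hwx h.symm
        have hcyu := (hcond u hxNu).1 (by rw [hswx]; exact hbnx)
        rw [hswx] at hcyu
        have hcuy : c s(u, y) = c s(u, x) := by rw [Sym2.eq_swap]; exact hcyu
        constructor
        · intro _
          rw [hcx', hcy', hcuy, if_pos hbu]
        · intro hmm; rw [hcx'] at hmm; exact absurd hmm hnotmem
    · rw [if_neg hbu] at hcx'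
      have hbu' : c s(u, x) ∉ satColors G c u := hbu
      have hnf : ∀ b ∈ satColors G c u, σ b ≠ c s(u, x) := fun b hb hba =>
        hfresh b hb (hba ▸ ⟨s(u, x), G.mem_edgeSet.mpr hux, rfl⟩)
      have h3 : ¬ ∃ b ∈ satColors G c u, σ b = c s(u, x) := by
        rintro ⟨b, hb, hba⟩; exact hnf b hb hba
      by_cases hbmem : c s(u, x) ∈ satColors G (symmetrize G c u v σ) x
      · constructor
        · intro hnot; rw [hcx'] at hnot; exact absurd hbmem hnot
        · intro _
          rw [hcx', hcy']
          by_cases hbx : c s(u, x) ∈ satColors G c x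
          · simp only [symmMap, dif_neg h3, if_pos hbx]
            have hcyu := (hcond u hxNu).2 (by rw [hswx]; exact hbx)
            rw [hswx] at hcyu
            have hcuy : c s(u, y) = σ₀ (c s(u, x)) := by rw [Sym2.eq_swap]; exact hcyu
            rw [hcuy]
            have hnsat : ¬ Saturates G c u (σ₀ (c s(u, x))) := by
              intro hb₂u
              have hb₂y : σ₀ (c s(u, x)) ∈ satColors G c y := hbij.mapsTo hbx
              have honly₂ : ∀ e ∈ G.edgeSet, c e = σ₀ (c s(u, x)) → e = s(u, y) := by
                intro e he hce
                exact eq_of_two_mem he (hb₂u.2 e he hce) (hb₂y.2 e he hce) (Ne.symm hyu)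
              have hinv : Set.InvOn (Function.invFunOn σ₀ (satColors G c x)) σ₀
                  (satColors G c x) (satColors G c y) := hbij.invOn_invFunOn
              have hbijτ := hbij.symm hinv.symm
              have hcondτ := rev_cond hNxy hbij hcond
              obtain ⟨-, -, hτu, -, -⟩ :=
                transfer hNxy.symm hbijτ.mapsTo hbijτ.injOn hcondτ hb₂u honly₂
              rw [hinv.1 hbx] at hτu
              exact hbu' hτu
            rw [if_neg hnsat]
          · have hxy2 : x = y := case3 hne huv hN hx hy hNxy hcond hnf hbmem hbx
            simp only [symmMap, dif_neg h3, if_neg hbx]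
            rw [← hxy2, if_neg hbu]
      · constructor
        · intro _
          rw [hcx', hcy']
          have hwit : ∃ e ∈ G.edgeSet, c e = c s(u, x) ∧ x ∉ e := by
            by_contra hno
            push_neg at hno
            apply hbmem
            refine (nonfresh_char huv hN hx hnf).mpr
              ⟨fun e he _ hce => hno e he hce, ?_, Or.inr ⟨hbu', x, hux, rfl⟩⟩
            intro z' huz' hcz' hau
            have := hno _ (G.mem_edgeSet.mpr huz') hcz'
            rcases Sym2.mem_iff.mp this with h | h
            · exact absurd h hxu
            · exact h.symm
          obtain ⟨e, he, hce, hxe⟩ := hwit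
          have hbnx : c s(u, x) ∉ satColors G c x := fun hbx => hxe (hbx.2 e he hce)
          have hcyu := (hcond u hxNu).1 (by rw [hswx]; exact hbnx)
          rw [hswx] at hcyu
          have hcuy : c s(u, y) = c s(u, x) := by rw [Sym2.eq_swap]; exact hcyu
          rw [hcuy, if_neg hbu]
        · intro hmm; rw [hcx'] at hmm; exact absurd hmm hbmem
  · have hxz : G.Adj x z := (G.mem_neighborSet _ _).mp hz
    have hyz : G.Adj y z := (G.mem_neighborSet _ _).mp (hNxy ▸ hz)
    have hcx' : symmetrize G c u v σ s(x, z) = c s(x, z) :=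
      symmetrize_eq_of_not (Or.inr (not_mem_mk (Ne.symm hx) (fun h => hzv h.symm)))
    have hcy' : symmetrize G c u v σ s(y, z) = c s(y, z) :=
      symmetrize_eq_of_not (Or.inr (not_mem_mk (Ne.symm hy) (fun h => hzv h.symm)))
    rw [hcx', hcy']
    have hnf : ∀ b ∈ satColors G c u, σ b ≠ c s(x, z) := fun b hb hba =>
      hfresh b hb (hba ▸ ⟨s(x, z), G.mem_edgeSet.mpr hxz, rfl⟩)
    have h3 : ¬ ∃ b ∈ satColors G c u, σ b = c s(x, z) := by
      rintro ⟨b, hb, hba⟩; exact hnf b hb hba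
    by_cases hax : c s(x, z) ∈ satColors G c x
    · have hmem : c s(x, z) ∈ satColors G (symmetrize G c u v σ) x :=
        sat_persist huv hN hfresh hx hax ⟨z, hxz, hzv, rfl⟩
      constructor
      · intro hnot; exact absurd hmem hnot
      · intro _
        simp only [symmMap, dif_neg h3, if_pos hax]
        exact (hcond z hz).2 hax
    · constructor
      · intro _; exact (hcond z hz).1 hax
      · intro hmem
        have hxy2 : x = y := case3 hne huv hN hx hy hNxy hcond hnf hmem hax
        simp only [symmMap, dif_neg h3, if_neg hax]
        rw [← hxy2]

end SymmetrizeAux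

/-- Symmetrization at `v` to `u` preserves symmetry of pairs of vertices avoiding `v`. -/
theorem symmetricVerts_symmetrize {V : Type*} (G : SimpleGraph V) (c : Sym2 V → ℕ)
    (u v : V) (huv : ¬ G.Adj u v) (hne : u ≠ v) (hN : G.neighborSet u = G.neighborSet v)
    (σ : ℕ → ℕ) (hinj : Set.InjOn σ (satColors G c u))
    (hfresh : ∀ a ∈ satColors G c u, σ a ∉ c '' G.edgeSet)
    (x y : V) (hx : x ≠ v) (hy : y ≠ v)
    (hxy : SymmetricVerts G c x y) :
    SymmetricVerts G (symmetrize G c u v σ) x y := by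
  obtain ⟨hNxy, σ₀, hbij, hcond⟩ := hxy
  obtain ⟨h2, h3⟩ := SymmetrizeAux.symmetricVerts_symmetrize' G c u v huv hne hN σ
    hinj hfresh x y hx hy hNxy σ₀ hbij hcond
  exact ⟨hNxy, SymmetrizeAux.symmMap G c u x σ σ₀, h2, h3⟩
end
end
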